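/- arXiv:2605.22312 — 4 statements merged into one kernel-verified Lean document; each statement's English description precedes it below -/
import Mathlib

section
/- Let κ > 0, d > 0, T > 0 and 0 < Γ ≤ T/2. Then the quantity ρ = (coth(κ d (T − Γ)) − 1) / (coth(κ d Γ) + 1) satisfies 0 ≤ ρ < 1. -/
/-! Since `coth t - 1 = e⁻ᵗ / sinh t` and `coth t + 1 = eᵗ / sinh t`, the contraction factor equals
`e^{-(x+y)} · sinh x / sinh y` with `x = κdΓ ≤ y = κd(T - Γ)`; the first factor is below `1` and,
`sinh` being monotone, the second lies in `(0, 1]`. -/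

noncomputable def coth (x : ℝ) : ℝ := Real.cosh x / Real.sinh x

open Real

lemma coth_sub_one {x : ℝ} (hx : sinh x ≠ 0) : coth x - 1 = exp (-x) / sinh x := by
  rw [coth, div_sub_one hx, cosh_sub_sinh]

lemma coth_add_one {x : ℝ} (hx : sinh x ≠ 0) : coth x + 1 = exp x / sinh x := by
  rw [coth, div_add_one hx, cosh_add_sinh]

lemma coth_sub_one_div_coth_add_one {x y : ℝ} (hx : 0 < x) (hy : 0 < y) :
    (coth y - 1) / (coth x + 1) = exp (-(x + y)) * (sinh x / sinh y) := by
  have hsx : sinh x ≠ 0 := (sinh_pos_iff.mpr hx).ne'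
  have hsy : sinh y ≠ 0 := (sinh_pos_iff.mpr hy).ne'
  rw [coth_sub_one hsy, coth_add_one hsx, neg_add, exp_add, exp_neg x]
  field_simp

lemma coth_sub_one_div_coth_add_one_mem_Ico {x y : ℝ} (hx : 0 < x) (hxy : x ≤ y) :
    (coth y - 1) / (coth x + 1) ∈ Set.Ico 0 1 := by
  have hy : 0 < y := hx.trans_le hxy
  have hsy : 0 < sinh y := sinh_pos_iff.mpr hy
  have hexp : exp (-(x + y)) < 1 := exp_lt_one_iff.mpr (by linarith)
  have hsinh : sinh x / sinh y ≤ 1 := (div_le_one hsy).mpr (sinh_le_sinh.mpr hxy)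
  have hsinh_pos : 0 < sinh x / sinh y := div_pos (sinh_pos_iff.mpr hx) hsy
  rw [coth_sub_one_div_coth_add_one hx hy]
  exact ⟨mul_nonneg (exp_pos _).le hsinh_pos.le, mul_lt_one_of_nonneg_of_lt_one_left (exp_pos _).le hexp hsinh⟩

theorem contraction_factor_lt_one_general {κ d T Γ : ℝ} (hκ : 0 < κ) (hd : 0 < d)
    (hΓ : 0 < Γ) (hΓT : Γ ≤ T / 2) :
    0 ≤ (coth (κ * d * (T - Γ)) - 1) / (coth (κ * d * Γ) + 1) ∧
      (coth (κ * d * (T - Γ)) - 1) / (coth (κ * d * Γ) + 1) < 1 := by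
  have hκd : 0 < κ * d := mul_pos hκ hd
  exact coth_sub_one_div_coth_add_one_mem_Ico (mul_pos hκd hΓ)
    (mul_le_mul_of_nonneg_left (by linarith) hκd.le)

theorem contraction_factor_lt_one {κ d T Γ : ℝ} (hκ : 0 < κ) (hd : 0 < d)
    (hT : 0 < T) (hΓ : 0 < Γ) (hΓT : Γ ≤ T / 2) :
    0 ≤ (coth (κ * d * (T - Γ)) - 1) / (coth (κ * d * Γ) + 1) ∧
      (coth (κ * d * (T - Γ)) - 1) / (coth (κ * d * Γ) + 1) < 1 :=
  contraction_factor_lt_one_general hκ hd hΓ hΓT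
end

section
/- Let a > 0 and define f(a) = (1/(2a)) · log((1 + e^{2a})/2). Then for x ∈ (0,1), the inequality coth(a(1−x)) − coth(a x) < 2 holds if and only if x < f(a). -/
/-!
With `coth t = 1 + 2 / (e^{2t} - 1)`, `u = e^{2ax}` and `v = e^{2a(1-x)}`, so that `uv = e^{2a}`,
the inequality reads `2/(v-1) - 2/(u-1) < 2`, i.e. `2u < uv + 1`, i.e. `u < (1 + e^{2a})/2`;
taking logarithms, this is `x < f(a)`.
-/

open Real

lemma coth_eq_one_add_two_div {t : ℝ} (ht : t ≠ 0) :
    coth t = 1 + 2 / (exp (2 * t) - 1) := by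
  have hsinh : sinh t ≠ 0 := sinh_ne_zero.mpr ht
  have hexp : exp (2 * t) - 1 ≠ 0 := by
    rw [sub_ne_zero, Ne, exp_eq_one_iff]; simpa using ht
  rw [coth, div_eq_iff hsinh, cosh_eq, sinh_eq, exp_neg]
  field_simp
  rw [show 2 * t = t + t by ring, exp_add]
  ring

lemma two_div_sub_two_div_lt_two_iff {u v : ℝ} (hu : 1 < u) (hv : 1 < v) :
    2 / (v - 1) - 2 / (u - 1) < 2 ↔ 2 * u < u * v + 1 := by
  rw [div_sub_div _ _ (by linarith) (by linarith), div_lt_iff₀ (by nlinarith)]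
  constructor <;> intro h <;> nlinarith

theorem coth_ineq_iff {a x : ℝ} (ha : 0 < a) (hx0 : 0 < x) (hx1 : x < 1) :
    coth (a * (1 - x)) - coth (a * x) < 2 ↔
      x < (1 / (2 * a)) * Real.log ((1 + Real.exp (2 * a)) / 2) := by
  have hax : 0 < a * x := mul_pos ha hx0
  have hay : 0 < a * (1 - x) := mul_pos ha (sub_pos.mpr hx1)
  have hprod : exp (2 * (a * x)) * exp (2 * (a * (1 - x))) = exp (2 * a) := by
    rw [← exp_add]; ring_nf
  have hlhs : coth (a * (1 - x)) - coth (a * x) < 2 ↔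
      2 * exp (2 * (a * x)) < exp (2 * a) + 1 := by
    rw [coth_eq_one_add_two_div hay.ne', coth_eq_one_add_two_div hax.ne',
      add_sub_add_left_eq_sub, two_div_sub_two_div_lt_two_iff (one_lt_exp_iff.mpr (by linarith))
        (one_lt_exp_iff.mpr (by linarith)), hprod]
  have hrhs : x < (1 / (2 * a)) * log ((1 + exp (2 * a)) / 2) ↔
      exp (2 * (a * x)) < (1 + exp (2 * a)) / 2 := by
    rw [← lt_log_iff_exp_lt (by positivity), one_div_mul_eq_div, lt_div_iff₀ (by positivity),
      show x * (2 * a) = 2 * (a * x) by ring]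
  rw [hlhs, hrhs]
  constructor <;> intro h <;> linarith
end

section
/- The function f(a) = (1/(2a)) · log((1 + e^{2a})/2) is strictly increasing on (0, ∞). -/
/-!
Put `g t = log ((1 + exp t) / 2)`, so that the function in question is `g (2a) / (2a)`.
Since `g' = sigmoid` is strictly increasing, `g` is strictly convex, and as `g 0 = 0`, the
quotient `g x / x` is the slope of the secant of `g` through `0` and `x`, which strictly
increases with `x`.
-/

open Real Set

theorem StrictConvexOn.strictMonoOn_div_of_map_zero {𝕜 : Type*} [Field 𝕜] [LinearOrder 𝕜]
    [IsStrictOrderedRing 𝕜] {f : 𝕜 → 𝕜} (hf : StrictConvexOn 𝕜 (Ici 0) f) (h0 : f 0 = 0) :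
    StrictMonoOn (fun x => f x / x) (Ioi 0) := by
  intro x hx y hy hxy
  simpa [h0] using hf.secant_strict_mono self_mem_Ici (Ioi_subset_Ici_self hx)
    (Ioi_subset_Ici_self hy) (ne_of_gt hx) (ne_of_gt hy) hxy

lemma hasDerivAt_log_one_add_exp_div_two (t : ℝ) :
    HasDerivAt (fun t => log ((1 + exp t) / 2)) (sigmoid t) t := by
  have h := (((hasDerivAt_exp t).const_add 1).div_const 2).log (by positivity)
  convert h using 1
  rw [sigmoid_def, exp_neg]
  field_simp
  ring

lemma strictConvexOn_log_one_add_exp_div_two :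
    StrictConvexOn ℝ univ (fun t => log ((1 + exp t) / 2)) := by
  have hderiv : deriv (fun t => log ((1 + exp t) / 2)) = sigmoid :=
    funext fun t => (hasDerivAt_log_one_add_exp_div_two t).deriv
  refine StrictMonoOn.strictConvexOn_of_deriv convex_univ
    (fun t _ => (hasDerivAt_log_one_add_exp_div_two t).continuousAt.continuousWithinAt) ?_
  rw [hderiv]
  exact sigmoid_strictMono.strictMonoOn _

theorem f_strictMonoOn :
    StrictMonoOn (fun a : ℝ => (1 / (2 * a)) * Real.log ((1 + Real.exp (2 * a)) / 2))
      (Set.Ioi (0 : ℝ)) := by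
  have hslope : StrictMonoOn (fun x => log ((1 + exp x) / 2) / x) (Ioi 0) :=
    (strictConvexOn_log_one_add_exp_div_two.subset (subset_univ _) (convex_Ici 0)
      ).strictMonoOn_div_of_map_zero (by norm_num)
  have hdouble : StrictMonoOn (fun a : ℝ => 2 * a) (Ioi 0) :=
    (strictMono_mul_left_of_pos two_pos).strictMonoOn _
  have hmaps : MapsTo (fun a : ℝ => 2 * a) (Ioi 0) (Ioi 0) :=
    fun _ ha => mul_pos two_pos (mem_Ioi.mp ha)
  simpa only [one_div_mul_eq_div, Function.comp_def] using hslope.comp hdouble hmaps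
end

section
/- Fix κ > 0, T > 0 and Γ ∈ (0, T). The function d ↦ (coth(κ d (T − Γ)) − 1)/(coth(κ d Γ) + 1) is monotonically decreasing on (0, ∞). -/
/-! With `s y = (exp y - 1) / y = slope exp 0 y`, one has `coth x - 1 = 1 / (x s(2x))` and
`coth x + 1 = 1 / (x s(-2x))`, so the contraction factor equals
`Γ / (T - Γ) * s(-2κdΓ) / s(2κd(T - Γ))`. Convexity of `exp` makes `s` increasing and it is
positive, so the numerator decreases and the denominator increases in `d`. -/

open Real Set

lemma slope_exp_zero_pos {y : ℝ} (hy : y ≠ 0) : 0 < slope exp 0 y := by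
  rw [slope_def_field, exp_zero, sub_zero]
  rcases hy.lt_or_gt with hy | hy
  · exact div_pos_of_neg_of_neg (sub_neg.2 (exp_lt_one_iff.2 hy)) hy
  · exact div_pos (sub_pos.2 (one_lt_exp_iff.2 hy)) hy

lemma monotoneOn_slope_exp_zero : MonotoneOn (slope exp 0) {0}ᶜ := by
  simpa [compl_eq_univ_sdiff] using convexOn_exp.slope_mono (mem_univ 0)

lemma coth_sub_one_eq {x : ℝ} (hx : x ≠ 0) : coth x - 1 = (x * slope exp 0 (2 * x))⁻¹ := by
  have hsinh : sinh x ≠ 0 := sinh_ne_zero.2 hx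
  rw [coth, div_sub_one hsinh, cosh_sub_sinh, slope_def_field, sinh_eq, exp_neg, exp_zero,
    show 2 * x = x + x by ring, exp_add]
  field_simp
  ring

lemma coth_neg (x : ℝ) : coth (-x) = -coth x := by
  rw [coth, coth, cosh_neg, sinh_neg, div_neg]

lemma coth_add_one_eq {x : ℝ} (hx : x ≠ 0) : coth x + 1 = (x * slope exp 0 (-(2 * x)))⁻¹ := by
  have h := coth_sub_one_eq (neg_ne_zero.2 hx)
  rw [coth_neg, mul_neg, neg_mul, inv_neg] at h
  linarith

theorem contraction_factor_antitone_general {κ T Γ : ℝ} (hκ : 0 < κ)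
    (hΓ : 0 < Γ) (hΓT : Γ < T) :
    AntitoneOn (fun d : ℝ => (coth (κ * d * (T - Γ)) - 1) / (coth (κ * d * Γ) + 1))
      (Set.Ioi (0 : ℝ)) := by
  have hTΓ : 0 < T - Γ := sub_pos.2 hΓT
  have hform : ∀ d ∈ Ioi (0 : ℝ),
      (coth (κ * d * (T - Γ)) - 1) / (coth (κ * d * Γ) + 1) =
        Γ / (T - Γ) * (slope exp 0 (-(2 * (κ * d * Γ))) / slope exp 0 (2 * (κ * d * (T - Γ)))) := by
    intro d (hd : 0 < d)
    have hx : κ * d * (T - Γ) ≠ 0 := by positivity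
    have hy : κ * d * Γ ≠ 0 := by positivity
    rw [coth_sub_one_eq hx, coth_add_one_eq hy]
    field_simp
  intro d₁ (hd₁ : 0 < d₁) d₂ (hd₂ : 0 < d₂) hd
  simp only [hform d₁ hd₁, hform d₂ hd₂]
  have hs₁ := slope_exp_zero_pos (by positivity : 2 * (κ * d₁ * (T - Γ)) ≠ 0)
  have hs₂ := slope_exp_zero_pos (neg_ne_zero.2 (by positivity) : -(2 * (κ * d₁ * Γ)) ≠ 0)
  gcongr
  · exact monotoneOn_slope_exp_zero (neg_ne_zero.2 (by positivity))
      (neg_ne_zero.2 (by positivity)) (by gcongr)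
  · exact monotoneOn_slope_exp_zero (mem_compl_singleton_iff.2 (by positivity))
      (mem_compl_singleton_iff.2 (by positivity)) (by gcongr)

theorem contraction_factor_antitone {κ T Γ : ℝ} (hκ : 0 < κ) (hT : 0 < T)
    (hΓ : 0 < Γ) (hΓT : Γ < T) :
    AntitoneOn (fun d : ℝ => (coth (κ * d * (T - Γ)) - 1) / (coth (κ * d * Γ) + 1))
      (Set.Ioi (0 : ℝ)) :=
  contraction_factor_antitone_general hκ hΓ hΓT
end
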